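/- The deformation tensor of the preferred vector field is expressed through the contortion tensor by θ_{ab} := h_a^c h_b^d ∇_{(c} v_{d)} = −K_{c(ab)} v^c + v_{(a} K_{b)cd} v^c v^d, and its trace, the expansion, is θ := η^{ab} θ_{ab} = K^a{}_{ba} v^b. -/

import Mathlib

open Finset

noncomputable section

/- Index set {0,1,2,3}. -/
abbrev Idx := Fin 4

/-- The Minkowski metric η_{ab} = diag(−1,1,1,1) (which equals its inverse η^{ab}). -/
def ηm (a b : Idx) : ℝ := if a = b then (if a = (0 : Idx) then -1 else 1) else 0

/-- Lowered components of a vector: v_a = η_{ab} v^b. -/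
def lo (v : Idx → ℝ) (a : Idx) : ℝ := ∑ b, ηm a b * v b

/-- Mixed projection tensor h_a^b = δ_a^b + v_a v^b. -/
def hmix (v : Idx → ℝ) (a b : Idx) : ℝ := (if a = b then 1 else 0) + lo v a * v b

/-- Fully lowered projection tensor h_{ab} = η_{ab} + v_a v_b. -/
def hlo (v : Idx → ℝ) (a b : Idx) : ℝ := ηm a b + lo v a * lo v b

/- Rank-3 tensors (all indices lowered). -/
abbrev T3 := Idx → Idx → Idx → ℝ

/-- The covariant derivative of the preferred vector field: ∇_a v_b := K_{bca} v^c. -/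
def nab (K : T3) (v : Idx → ℝ) (a b : Idx) : ℝ := ∑ c, K b c a * v c

/-- The acceleration v̇_a = K_{abc} v^b v^c. -/
def vdot (K : T3) (v : Idx → ℝ) (a : Idx) : ℝ := ∑ b, ∑ c, K a b c * v b * v c

/-- The deformation tensor θ_{ab} = h_a^c h_b^d ∇_{(c} v_{d)}. -/
def deform (K : T3) (v : Idx → ℝ) (a b : Idx) : ℝ :=
  ∑ c, ∑ d, hmix v a c * hmix v b d * ((nab K v c d + nab K v d c) / 2)

/-!
Antisymmetry of `K` in its first two indices makes `v^d ∇_c v_d = K_{dec} v^e v^d` vanish, and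
with it `v^a v̇_a = v^c v^a ∇_c v_a`, while `v^c ∇_c v_d = v̇_d`. Expanding the projectors in
`h_a^c h_b^d ∇_{(c} v_{d)}` therefore leaves `∇_{(a} v_{b)} = -K_{c(ab)} v^c` plus the
acceleration terms `v_{(a} v̇_{b)}`, and those contract with `η^{ab}` to `v^a v̇_a = 0`.
-/

theorem sum_sum_eq_zero_of_antisymm {ι : Type*} [Fintype ι] (f : ι → ι → ℝ)
    (hf : ∀ a b, f a b = -f b a) : ∑ a, ∑ b, f a b = 0 := by
  have h : ∑ a, ∑ b, f a b = -∑ a, ∑ b, f a b :=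
    calc ∑ a, ∑ b, f a b = ∑ b, ∑ a, f a b := sum_comm
      _ = ∑ b, ∑ a, -f b a := sum_congr rfl fun b _ => sum_congr rfl fun a _ => hf a b
      _ = -∑ a, ∑ b, f a b := by simp only [sum_neg_distrib]
  linarith

theorem sum_proj_mul {ι : Type*} [Fintype ι] [DecidableEq ι] (u w : ι → ℝ) (a : ι)
    (T : ι → ℝ) :
    ∑ c, ((if a = c then 1 else 0) + u a * w c) * T c = T a + u a * ∑ c, w c * T c := by
  simp only [add_mul, sum_add_distrib, ite_mul, one_mul, zero_mul, sum_ite_eq, mem_univ, if_true,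
    mul_sum, mul_assoc]

theorem sum_sum_proj_mul_proj {ι : Type*} [Fintype ι] [DecidableEq ι] (S : ι → ι → ℝ)
    (u w : ι → ℝ) (a b : ι) :
    ∑ c, ∑ d, ((if a = c then 1 else 0) + u a * w c) * ((if b = d then 1 else 0) + u b * w d) * S c d
      = S a b + u b * ∑ d, w d * S a d + u a * ∑ c, w c * S c b
        + u a * u b * ∑ c, w c * ∑ d, w d * S c d := by
  simp_rw [mul_assoc _ _ (S _ _), ← mul_sum, sum_proj_mul, mul_add, sum_add_distrib,
    mul_left_comm (w _) (u b), ← mul_sum]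
  ring

theorem sum_ηm_mul (a : Idx) (f : Idx → ℝ) : ∑ b, ηm a b * f b = ηm a a * f a := by
  simp [ηm, ite_mul]

theorem lo_eq (v : Idx → ℝ) (a : Idx) : lo v a = ηm a a * v a :=
  sum_ηm_mul a v

theorem ηm_mul_self (a : Idx) : ηm a a * ηm a a = 1 := by
  simp only [ηm]; split_ifs <;> norm_num

theorem sum_mul_nab_left (K : T3) (v : Idx → ℝ) (d : Idx) :
    ∑ c, v c * nab K v c d = vdot K v d := by
  simp only [nab, vdot, mul_sum]
  rw [sum_comm]
  exact sum_congr rfl fun _ _ => sum_congr rfl fun _ _ => by ring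

section Contortion

variable {K : T3} {v : Idx → ℝ}

theorem sum_mul_nab_right_eq_zero (hK : ∀ a b c, K a b c = -K b a c) (c : Idx) :
    ∑ d, v d * nab K v c d = 0 := by
  simp only [nab, mul_sum]
  exact sum_sum_eq_zero_of_antisymm _ fun d e => by rw [hK d e c]; ring

theorem sum_mul_vdot_eq_zero (hK : ∀ a b c, K a b c = -K b a c) :
    ∑ c, v c * vdot K v c = 0 :=
  calc ∑ c, v c * vdot K v c = ∑ c, ∑ e, v c * (v e * nab K v e c) := by
        simp only [← sum_mul_nab_left, mul_sum]
    _ = ∑ e, v e * ∑ c, v c * nab K v e c := by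
        rw [sum_comm]
        exact sum_congr rfl fun e _ => by rw [mul_sum]; exact sum_congr rfl fun c _ => by ring
    _ = 0 := by simp only [sum_mul_nab_right_eq_zero hK, mul_zero, sum_const_zero]

theorem nab_symm_eq (hK : ∀ a b c, K a b c = -K b a c) (a b : Idx) :
    (nab K v a b + nab K v b a) / 2 = -∑ c, (K c a b + K c b a) / 2 * v c := by
  simp only [nab, ← sum_add_distrib, sum_div, ← sum_neg_distrib]
  exact sum_congr rfl fun c _ => by rw [hK b c a, hK a c b]; ring

theorem sum_mul_nab_symm (hK : ∀ a b c, K a b c = -K b a c) (a : Idx) :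
    ∑ d, v d * ((nab K v a d + nab K v d a) / 2) = vdot K v a / 2 := by
  simp only [mul_div_assoc', mul_add, ← sum_div, sum_add_distrib, sum_mul_nab_right_eq_zero hK,
    sum_mul_nab_left, zero_add]

theorem deform_eq (hK : ∀ a b c, K a b c = -K b a c) (a b : Idx) :
    deform K v a b = -(∑ c, ((K c a b + K c b a) / 2) * v c)
      + (lo v a * vdot K v b + lo v b * vdot K v a) / 2 := by
  have hsymm : ∑ c, v c * ((nab K v c b + nab K v b c) / 2) = vdot K v b / 2 := by
    simp only [add_comm (nab K v _ b)]
    exact sum_mul_nab_symm hK b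
  unfold deform hmix
  rw [sum_sum_proj_mul_proj, hsymm, nab_symm_eq hK]
  simp only [sum_mul_nab_symm hK]
  rw [sum_congr rfl fun c _ => mul_div_assoc' (v c) _ 2, ← sum_div, sum_mul_vdot_eq_zero hK]
  ring

theorem sum_ηm_mul_deform (hK : ∀ a b c, K a b c = -K b a c) :
    ∑ a, ∑ b, ηm a b * deform K v a b = ∑ a, ∑ b, ∑ c, ηm a c * K c b a * v b := by
  have hdiag : ∀ a, ηm a a * deform K v a a
      = -(ηm a a * ∑ c, K c a a * v c) + v a * vdot K v a := fun a => by
    rw [deform_eq hK, lo_eq]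
    simp only [add_self_div_two]
    linear_combination (v a * vdot K v a) * ηm_mul_self a
  calc ∑ a, ∑ b, ηm a b * deform K v a b
      = -∑ a, ηm a a * ∑ c, K c a a * v c := by
        simp only [sum_ηm_mul, hdiag, sum_add_distrib, sum_neg_distrib, sum_mul_vdot_eq_zero hK,
          add_zero]
    _ = ∑ a, ∑ b, ∑ c, ηm a c * K c b a * v b := by
      rw [← sum_neg_distrib]
      refine sum_congr rfl fun a _ => ?_
      simp only [mul_assoc, sum_ηm_mul, ← mul_sum, ← mul_neg, ← sum_neg_distrib]
      exact congrArg _ (sum_congr rfl fun b _ => by rw [hK]; ring)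

end Contortion

theorem statement9_general (v : Idx → ℝ)
    (K : T3) (hK : ∀ a b c, K a b c = -K b a c) :
    (∀ a b : Idx,
      deform K v a b
        = -(∑ c, ((K c a b + K c b a) / 2) * v c)
          + (lo v a * vdot K v b + lo v b * vdot K v a) / 2) ∧
    (∑ a, ∑ b, ηm a b * deform K v a b)
      = ∑ a, ∑ b, ∑ c, ηm a c * K c b a * v b :=
  ⟨deform_eq hK, sum_ηm_mul_deform hK⟩

/-- The deformation tensor is expressed through the contortion tensor as
`θ_{ab} = −K_{c(ab)} v^c + v_{(a} K_{b)cd} v^c v^d`, and its trace, the expansion, is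
`θ = η^{ab} θ_{ab} = K^a{}_{ba} v^b`. -/
theorem statement9 (v : Idx → ℝ) (hv : (∑ a, lo v a * v a) = -1)
    (K : T3) (hK : ∀ a b c, K a b c = -K b a c) :
    (∀ a b : Idx,
      deform K v a b
        = -(∑ c, ((K c a b + K c b a) / 2) * v c)
          + (lo v a * vdot K v b + lo v b * vdot K v a) / 2) ∧
    (∑ a, ∑ b, ηm a b * deform K v a b)
      = ∑ a, ∑ b, ∑ c, ηm a c * K c b a * v b :=
  statement9_general v K hK
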